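/- Let P₁,…,P₄ ∈ ℝ² and let Φ, B, J be the associated bilinear map, its Jacobian matrix and determinant. Let U ⊆ ℝ² be an open set on which Φ is injective and J(x̂) ≠ 0 for all x̂ ∈ U, let p̂ : ℝ² → ℝ² be differentiable on U, and let p : ℝ² → ℝ² be a vector field differentiable at every point of Φ(U) such that p(Φ(x̂)) = (B(x̂)⁻¹)ᵀ·p̂(x̂) for all x̂ ∈ U (the contravariant/Piola transform). Then for every x̂₀ ∈ U, (∇×p)(Φ(x̂₀)) = J(x̂₀)⁻¹·(∇×p̂)(x̂₀). -/

import Mathlib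

/-- Entry `B₁₁` of the Jacobian matrix of the bilinear map: `(x₂₁(1−ŷ) + x₃₄(1+ŷ))/4`. -/
noncomputable def B11 (x1 x2 x3 x4 yh : ℝ) : ℝ :=
  ((x2 - x1) * (1 - yh) + (x3 - x4) * (1 + yh)) / 4

/-- Entry `B₁₂`: `(x₄₁(1−x̂) + x₃₂(1+x̂))/4`. -/
noncomputable def B12 (x1 x2 x3 x4 xh : ℝ) : ℝ :=
  ((x4 - x1) * (1 - xh) + (x3 - x2) * (1 + xh)) / 4

/-- Entry `B₂₁`: `(y₂₁(1−ŷ) + y₃₄(1+ŷ))/4`. -/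
noncomputable def B21 (y1 y2 y3 y4 yh : ℝ) : ℝ :=
  ((y2 - y1) * (1 - yh) + (y3 - y4) * (1 + yh)) / 4

/-- Entry `B₂₂`: `(y₄₁(1−x̂) + y₃₂(1+x̂))/4`. -/
noncomputable def B22 (y1 y2 y3 y4 xh : ℝ) : ℝ :=
  ((y4 - y1) * (1 - xh) + (y3 - y2) * (1 + xh)) / 4

/-- The Jacobian determinant `J(x̂,ŷ) = det B(x̂,ŷ)` of the bilinear map. -/
noncomputable def Jdet (x1 x2 x3 x4 y1 y2 y3 y4 xh yh : ℝ) : ℝ :=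
  B11 x1 x2 x3 x4 yh * B22 y1 y2 y3 y4 xh - B12 x1 x2 x3 x4 xh * B21 y1 y2 y3 y4 yh

/-- Scalar curl of a planar vector field: `∇×u = ∂u₂/∂x̂ − ∂u₁/∂ŷ`. -/
noncomputable def scurl (u : ℝ × ℝ → ℝ × ℝ) (z : ℝ × ℝ) : ℝ :=
  deriv (fun t => (u (t, z.2)).2) z.1 - deriv (fun t => (u (z.1, t)).1) z.2

/-- The bilinear map `Φ(x̂,ŷ) = σ₁P₁ + σ₂P₂ + σ₃P₃ + σ₄P₄`. -/
noncomputable def Phi (x1 x2 x3 x4 y1 y2 y3 y4 : ℝ) (z : ℝ × ℝ) : ℝ × ℝ :=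
  ((1 - z.1) * (1 - z.2) / 4 * x1 + (1 + z.1) * (1 - z.2) / 4 * x2 +
     (1 + z.1) * (1 + z.2) / 4 * x3 + (1 - z.1) * (1 + z.2) / 4 * x4,
   (1 - z.1) * (1 - z.2) / 4 * y1 + (1 + z.1) * (1 - z.2) / 4 * y2 +
     (1 + z.1) * (1 + z.2) / 4 * y3 + (1 - z.1) * (1 + z.2) / 4 * y4)

/-!
Inverting the Piola relation gives `p̂ = Bᵀ (p ∘ Φ)` near `x̂₀`, i.e. `p̂ · dx̂` is the pullback
of the 1-form `p · dx` under `Φ`. The curl is the exterior derivative of such a 1-form, and `d`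
commutes with pullback; the area form pulls back to `J` times itself. Concretely, differentiating
`Bᵀ (p ∘ Φ)` produces the mixed derivative `∂²Φ/∂x̂∂ŷ` twice with opposite signs, and what remains
is `J · (∇×p)(Φ x̂₀)`.
-/

open Filter Topology

section Calculus

variable {E F : Type*} [NormedAddCommGroup E] [NormedSpace ℝ E] [NormedAddCommGroup F]
  [NormedSpace ℝ F]

theorem HasDerivAt.fst {f : ℝ → E × F} {f' : E × F} {x : ℝ} (hf : HasDerivAt f f' x) :
    HasDerivAt (fun y => (f y).1) f'.1 x :=
  (ContinuousLinearMap.fst ℝ E F).hasFDerivAt.comp_hasDerivAt x hf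

theorem HasDerivAt.snd {f : ℝ → E × F} {f' : E × F} {x : ℝ} (hf : HasDerivAt f f' x) :
    HasDerivAt (fun y => (f y).2) f'.2 x :=
  (ContinuousLinearMap.snd ℝ E F).hasFDerivAt.comp_hasDerivAt x hf

theorem hasDerivAt_of_forall_eq_add_smul {f : ℝ → E} {v : E} {x : ℝ}
    (h : ∀ y, f y = f x + (y - x) • v) : HasDerivAt f v x := by
  rw [funext h]
  simpa using (((hasDerivAt_id x).sub_const x).smul_const v).const_add (f x)

end Calculus

/-- `ℝ × ℝ` carries the sup norm, hence no `inner`. -/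
def planeDot (a b : ℝ × ℝ) : ℝ := a.1 * b.1 + a.2 * b.2

def planeCross (a b : ℝ × ℝ) : ℝ := a.1 * b.2 - a.2 * b.1

theorem HasDerivAt.planeDot {f g : ℝ → ℝ × ℝ} {f' g' : ℝ × ℝ} {x : ℝ}
    (hf : HasDerivAt f f' x) (hg : HasDerivAt g g' x) :
    HasDerivAt (fun y => planeDot (f y) (g y)) (planeDot f' (g x) + planeDot (f x) g') x := by
  refine ((hf.fst.mul hg.fst).add (hf.snd.mul hg.snd)).congr_deriv ?_
  simp only [_root_.planeDot]
  ring

theorem planeDot_apply_sub_planeDot_apply (L : ℝ × ℝ →L[ℝ] ℝ × ℝ) (a c : ℝ × ℝ) :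
    planeDot c (L a) - planeDot a (L c) = planeCross a c * ((L (1, 0)).2 - (L (0, 1)).1) := by
  have hL : ∀ v : ℝ × ℝ, L v = v.1 • L (1, 0) + v.2 • L (0, 1) := fun v => by
    rw [← map_smul, ← map_smul, ← map_add]; congr 1; ext <;> simp
  rw [hL a, hL c]
  simp only [planeDot, planeCross, Prod.fst_add, Prod.snd_add, Prod.smul_fst, Prod.smul_snd,
    smul_eq_mul]
  ring

theorem scurl_eq_fderiv {f : ℝ × ℝ → ℝ × ℝ} {w : ℝ × ℝ} (hf : DifferentiableAt ℝ f w) :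
    scurl f w = (fderiv ℝ f w (1, 0)).2 - (fderiv ℝ f w (0, 1)).1 := by
  have h₁ : HasDerivAt (fun s => f (s, w.2)) (fderiv ℝ f w (1, 0)) w.1 :=
    hf.hasFDerivAt.comp_hasDerivAt w.1 ((hasDerivAt_id _).prodMk (hasDerivAt_const _ _))
  have h₂ : HasDerivAt (fun t => f (w.1, t)) (fderiv ℝ f w (0, 1)) w.2 :=
    hf.hasFDerivAt.comp_hasDerivAt w.2 ((hasDerivAt_const _ _).prodMk (hasDerivAt_id _))
  rw [scurl, h₁.snd.deriv, h₂.fst.deriv]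

theorem scurl_congr {f g : ℝ × ℝ → ℝ × ℝ} {z : ℝ × ℝ} (h : f =ᶠ[𝓝 z] g) :
    scurl f z = scurl g z := by
  have h₁ : Tendsto (fun s : ℝ => (s, z.2)) (𝓝 z.1) (𝓝 z) :=
    (continuous_id.prodMk continuous_const).tendsto' _ _ rfl
  have h₂ : Tendsto (fun t : ℝ => (z.1, t)) (𝓝 z.2) (𝓝 z) :=
    (continuous_const.prodMk continuous_id).tendsto' _ _ rfl
  unfold scurl
  congr 1 <;> apply Filter.EventuallyEq.deriv_eq
  exacts [(h.comp_tendsto h₁).fun_comp Prod.snd, (h.comp_tendsto h₂).fun_comp Prod.fst]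

/-- `Bᵀ (p ∘ Φ)`, where `A` and `C` are the columns of `B`: the pullback of the 1-form `p · dx`. -/
def covPullback (Φ A C p : ℝ × ℝ → ℝ × ℝ) (z : ℝ × ℝ) : ℝ × ℝ :=
  (planeDot (A z) (p (Φ z)), planeDot (C z) (p (Φ z)))

/-- `d` commutes with pullback: the two terms carrying the mixed derivative `c` cancel. -/
theorem scurl_covPullback {Φ A C p : ℝ × ℝ → ℝ × ℝ} {z c : ℝ × ℝ}
    (hΦ₁ : HasDerivAt (fun s => Φ (s, z.2)) (A z) z.1)
    (hΦ₂ : HasDerivAt (fun t => Φ (z.1, t)) (C z) z.2)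
    (hA : HasDerivAt (fun t => A (z.1, t)) c z.2)
    (hC : HasDerivAt (fun s => C (s, z.2)) c z.1)
    (hp : DifferentiableAt ℝ p (Φ z)) :
    scurl (covPullback Φ A C p) z = planeCross (A z) (C z) * scurl p (Φ z) := by
  have h₁ : HasDerivAt (fun s => (covPullback Φ A C p (s, z.2)).2) _ z.1 :=
    hC.planeDot (hp.hasFDerivAt.comp_hasDerivAt z.1 hΦ₁)
  have h₂ : HasDerivAt (fun t => (covPullback Φ A C p (z.1, t)).1) _ z.2 :=
    hA.planeDot (hp.hasFDerivAt.comp_hasDerivAt z.2 hΦ₂)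
  rw [scurl, h₁.deriv, h₂.deriv, scurl_eq_fderiv hp, ← planeDot_apply_sub_planeDot_apply]
  ring

section BilinearMap

variable (x1 x2 x3 x4 y1 y2 y3 y4 : ℝ)

noncomputable def jacCol₁ (z : ℝ × ℝ) : ℝ × ℝ := (B11 x1 x2 x3 x4 z.2, B21 y1 y2 y3 y4 z.2)

noncomputable def jacCol₂ (z : ℝ × ℝ) : ℝ × ℝ := (B12 x1 x2 x3 x4 z.1, B22 y1 y2 y3 y4 z.1)

noncomputable def mixedPartial : ℝ × ℝ := ((x1 - x2 + x3 - x4) / 4, (y1 - y2 + y3 - y4) / 4)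

theorem hasDerivAt_Phi_left (z : ℝ × ℝ) :
    HasDerivAt (fun s => Phi x1 x2 x3 x4 y1 y2 y3 y4 (s, z.2))
      (jacCol₁ x1 x2 x3 x4 y1 y2 y3 y4 z) z.1 :=
  hasDerivAt_of_forall_eq_add_smul fun s => by
    ext <;> simp only [Phi, jacCol₁, B11, B21, Prod.fst_add, Prod.snd_add, Prod.smul_fst,
      Prod.smul_snd, smul_eq_mul] <;> ring

theorem hasDerivAt_Phi_right (z : ℝ × ℝ) :
    HasDerivAt (fun t => Phi x1 x2 x3 x4 y1 y2 y3 y4 (z.1, t))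
      (jacCol₂ x1 x2 x3 x4 y1 y2 y3 y4 z) z.2 :=
  hasDerivAt_of_forall_eq_add_smul fun t => by
    ext <;> simp only [Phi, jacCol₂, B12, B22, Prod.fst_add, Prod.snd_add, Prod.smul_fst,
      Prod.smul_snd, smul_eq_mul] <;> ring

theorem hasDerivAt_jacCol₁_right (z : ℝ × ℝ) :
    HasDerivAt (fun t => jacCol₁ x1 x2 x3 x4 y1 y2 y3 y4 (z.1, t))
      (mixedPartial x1 x2 x3 x4 y1 y2 y3 y4) z.2 :=
  hasDerivAt_of_forall_eq_add_smul fun t => by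
    ext <;> simp only [jacCol₁, mixedPartial, B11, B21, Prod.fst_add, Prod.snd_add, Prod.smul_fst,
      Prod.smul_snd, smul_eq_mul] <;> ring

theorem hasDerivAt_jacCol₂_left (z : ℝ × ℝ) :
    HasDerivAt (fun s => jacCol₂ x1 x2 x3 x4 y1 y2 y3 y4 (s, z.2))
      (mixedPartial x1 x2 x3 x4 y1 y2 y3 y4) z.1 :=
  hasDerivAt_of_forall_eq_add_smul fun s => by
    ext <;> simp only [jacCol₂, mixedPartial, B12, B22, Prod.fst_add, Prod.snd_add, Prod.smul_fst,
      Prod.smul_snd, smul_eq_mul] <;> ring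

theorem Jdet_eq_planeCross (z : ℝ × ℝ) :
    Jdet x1 x2 x3 x4 y1 y2 y3 y4 z.1 z.2 =
      planeCross (jacCol₁ x1 x2 x3 x4 y1 y2 y3 y4 z) (jacCol₂ x1 x2 x3 x4 y1 y2 y3 y4 z) := by
  simp only [Jdet, planeCross, jacCol₁, jacCol₂]
  ring

variable {x1 x2 x3 x4 y1 y2 y3 y4}

theorem scurl_covPullback_Phi {p : ℝ × ℝ → ℝ × ℝ} {z : ℝ × ℝ}
    (hp : DifferentiableAt ℝ p (Phi x1 x2 x3 x4 y1 y2 y3 y4 z)) :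
    scurl (covPullback (Phi x1 x2 x3 x4 y1 y2 y3 y4) (jacCol₁ x1 x2 x3 x4 y1 y2 y3 y4)
        (jacCol₂ x1 x2 x3 x4 y1 y2 y3 y4) p) z =
      Jdet x1 x2 x3 x4 y1 y2 y3 y4 z.1 z.2 * scurl p (Phi x1 x2 x3 x4 y1 y2 y3 y4 z) := by
  rw [Jdet_eq_planeCross]
  exact scurl_covPullback (hasDerivAt_Phi_left ..) (hasDerivAt_Phi_right ..)
    (hasDerivAt_jacCol₁_right ..) (hasDerivAt_jacCol₂_left ..) hp

theorem eqOn_covPullback_of_piola {U : Set (ℝ × ℝ)} {phat p : ℝ × ℝ → ℝ × ℝ}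
    (hJ : ∀ z ∈ U, Jdet x1 x2 x3 x4 y1 y2 y3 y4 z.1 z.2 ≠ 0)
    (hpiola : ∀ z ∈ U,
      p (Phi x1 x2 x3 x4 y1 y2 y3 y4 z) =
        ((B22 y1 y2 y3 y4 z.1 * (phat z).1 - B21 y1 y2 y3 y4 z.2 * (phat z).2) /
            Jdet x1 x2 x3 x4 y1 y2 y3 y4 z.1 z.2,
         (-(B12 x1 x2 x3 x4 z.1) * (phat z).1 + B11 x1 x2 x3 x4 z.2 * (phat z).2) /
            Jdet x1 x2 x3 x4 y1 y2 y3 y4 z.1 z.2)) :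
    Set.EqOn phat (covPullback (Phi x1 x2 x3 x4 y1 y2 y3 y4) (jacCol₁ x1 x2 x3 x4 y1 y2 y3 y4)
      (jacCol₂ x1 x2 x3 x4 y1 y2 y3 y4) p) U := by
  intro z hz
  have hJz := hJ z hz
  rw [covPullback, hpiola z hz]
  unfold Jdet at hJz ⊢
  ext <;> simp only [planeDot, jacCol₁, jacCol₂]
    <;> rw [mul_div_assoc', mul_div_assoc', ← add_div, eq_div_iff hJz] <;> ring

end BilinearMap

theorem piola_curl_transform_general (x1 x2 x3 x4 y1 y2 y3 y4 : ℝ) (U : Set (ℝ × ℝ))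
    (hU : IsOpen U)
    (hJ : ∀ z ∈ U, Jdet x1 x2 x3 x4 y1 y2 y3 y4 z.1 z.2 ≠ 0)
    (phat p : ℝ × ℝ → ℝ × ℝ)
    (hp : ∀ w ∈ Phi x1 x2 x3 x4 y1 y2 y3 y4 '' U, DifferentiableAt ℝ p w)
    (hpiola : ∀ z ∈ U,
      p (Phi x1 x2 x3 x4 y1 y2 y3 y4 z) =
        ((B22 y1 y2 y3 y4 z.1 * (phat z).1 - B21 y1 y2 y3 y4 z.2 * (phat z).2) /
            Jdet x1 x2 x3 x4 y1 y2 y3 y4 z.1 z.2,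
         (-(B12 x1 x2 x3 x4 z.1) * (phat z).1 + B11 x1 x2 x3 x4 z.2 * (phat z).2) /
            Jdet x1 x2 x3 x4 y1 y2 y3 y4 z.1 z.2))
    (z0 : ℝ × ℝ) (hz0 : z0 ∈ U) :
    scurl p (Phi x1 x2 x3 x4 y1 y2 y3 y4 z0) =
      (Jdet x1 x2 x3 x4 y1 y2 y3 y4 z0.1 z0.2)⁻¹ * scurl phat z0 := by
  have hphat := (eqOn_covPullback_of_piola hJ hpiola).eventuallyEq_of_mem (hU.mem_nhds hz0)
  rw [scurl_congr hphat, scurl_covPullback_Phi (hp _ (Set.mem_image_of_mem _ hz0)),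
    inv_mul_cancel_left₀ (hJ z0 hz0)]

/-- If `p ∘ Φ = (B⁻¹)ᵀ p̂` (contravariant/Piola transform, written here componentwise via the
adjugate formula `(B⁻¹)ᵀ = J⁻¹·[[B₂₂,−B₂₁],[−B₁₂,B₁₁]]`) on an open set `U` on which `Φ` is
injective and `J ≠ 0`, then `(∇×p)(Φ(x̂₀)) = J(x̂₀)⁻¹·(∇×p̂)(x̂₀)` for every `x̂₀ ∈ U`. -/
theorem piola_curl_transform (x1 x2 x3 x4 y1 y2 y3 y4 : ℝ) (U : Set (ℝ × ℝ))
    (hU : IsOpen U)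
    (hinj : Set.InjOn (Phi x1 x2 x3 x4 y1 y2 y3 y4) U)
    (hJ : ∀ z ∈ U, Jdet x1 x2 x3 x4 y1 y2 y3 y4 z.1 z.2 ≠ 0)
    (phat p : ℝ × ℝ → ℝ × ℝ)
    (hphat : ∀ z ∈ U, DifferentiableAt ℝ phat z)
    (hp : ∀ w ∈ Phi x1 x2 x3 x4 y1 y2 y3 y4 '' U, DifferentiableAt ℝ p w)
    (hpiola : ∀ z ∈ U,
      p (Phi x1 x2 x3 x4 y1 y2 y3 y4 z) =
        ((B22 y1 y2 y3 y4 z.1 * (phat z).1 - B21 y1 y2 y3 y4 z.2 * (phat z).2) /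
            Jdet x1 x2 x3 x4 y1 y2 y3 y4 z.1 z.2,
         (-(B12 x1 x2 x3 x4 z.1) * (phat z).1 + B11 x1 x2 x3 x4 z.2 * (phat z).2) /
            Jdet x1 x2 x3 x4 y1 y2 y3 y4 z.1 z.2))
    (z0 : ℝ × ℝ) (hz0 : z0 ∈ U) :
    scurl p (Phi x1 x2 x3 x4 y1 y2 y3 y4 z0) =
      (Jdet x1 x2 x3 x4 y1 y2 y3 y4 z0.1 z0.2)⁻¹ * scurl phat z0 :=
  piola_curl_transform_general x1 x2 x3 x4 y1 y2 y3 y4 U hU hJ phat p hp hpiola z0 hz0
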